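/- arXiv:2603.17151 — 3 statements merged into one kernel-verified Lean document; each statement's English description precedes it below -/
import Mathlib

section
/- Let μ be a probability measure on ℝ and let κ ∈ ℝ be such that μ({κ}) = 0. Then the relative put price function p(κ') = ∫ max(exp κ' − exp x, 0) dμ(x) is differentiable at κ with derivative p'(κ) = exp κ · μ((-∞, κ]); in particular the derivative of the put price recovers the implied cumulative distribution function via Ψ(κ) = exp(−κ) p'(κ). -/
/-!
Differentiate under the integral sign. For each `x` the payoff `k ↦ max (exp k - exp x) 0` is
differentiable at `κ` unless `x = κ`, with derivative `exp κ` if `x < κ` and `0` if `x > κ`;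
near `κ` it is uniformly Lipschitz, so dominated convergence applies. Since `μ {κ} = 0` the
exceptional point is negligible, and the integral of the derivative is
`exp κ * μ (Iio κ) = exp κ * μ (Iic κ)`.
-/

open MeasureTheory Real Set Filter

theorem HasDerivAt.max_zero {g : ℝ → ℝ} {g' k : ℝ} (hg : HasDerivAt g g' k) (hk : g k ≠ 0) :
    HasDerivAt (fun t => max (g t) 0) (if 0 < g k then g' else 0) k := by
  rcases hk.lt_or_gt with hneg | hpos
  · rw [if_neg hneg.not_gt]
    refine (hasDerivAt_const k 0).congr_of_eventuallyEq ?_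
    filter_upwards [hg.continuousAt.eventually (gt_mem_nhds hneg)] with t ht
    exact max_eq_right ht.le
  · rw [if_pos hpos]
    refine hg.congr_of_eventuallyEq ?_
    filter_upwards [hg.continuousAt.eventually (lt_mem_nhds hpos)] with t ht
    exact max_eq_left ht.le

theorem lipschitzOnWith_exp_Iic (b : ℝ) : LipschitzOnWith (nnabs (exp b)) exp (Iic b) :=
  (convex_Iic b).lipschitzOnWith_of_nnnorm_hasDerivWithin_le
    (fun x _ => (hasDerivAt_exp x).hasDerivWithinAt) fun x hx => by
      rw [← NNReal.coe_le_coe, coe_nnnorm, coe_nnabs, norm_of_nonneg (exp_pos x).le,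
        abs_of_pos (exp_pos b)]
      exact exp_le_exp.mpr hx

theorem lipschitzOnWith_putPayoff_Iic (b c : ℝ) :
    LipschitzOnWith (nnabs (exp b)) (fun k => max (exp k - c) 0) (Iic b) := by
  simpa [Function.comp_def] using
    ((IsometryEquiv.subRight c).isometry.lipschitz.max_const 0).comp_lipschitzOnWith
      (lipschitzOnWith_exp_Iic b)

theorem hasDerivAt_putPayoff {x κ : ℝ} (hx : x ≠ κ) :
    HasDerivAt (fun k => max (exp k - exp x) 0) ((Iio κ).indicator (fun _ => exp κ) x) κ := by
  convert ((hasDerivAt_exp κ).sub_const (exp x)).max_zero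
    (sub_ne_zero.mpr (exp_injective.ne hx.symm)) using 1
  simp [indicator_apply, sub_pos]

theorem hasDerivAt_integral_putPayoff (μ : Measure ℝ) [IsFiniteMeasure μ] {κ : ℝ}
    (hκ : μ {κ} = 0) :
    HasDerivAt (fun k => ∫ x, max (exp k - exp x) 0 ∂μ) (exp κ * μ.real (Iic κ)) κ := by
  have hmeas (k : ℝ) : AEStronglyMeasurable (fun x => max (exp k - exp x) 0) μ :=
    (continuous_const.sub continuous_exp).max continuous_const |>.aestronglyMeasurable
  have hint : Integrable (fun x => max (exp κ - exp x) 0) μ := by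
    refine (integrable_const (exp κ)).mono' (hmeas κ) (ae_of_all _ fun x => ?_)
    rw [norm_of_nonneg (le_max_right _ _)]
    exact max_le (by linarith [exp_pos x]) (exp_pos κ).le
  have hdiff : ∀ᵐ x ∂μ, HasDerivAt (fun k => max (exp k - exp x) 0)
      ((Iio κ).indicator (fun _ => exp κ) x) κ := by
    filter_upwards [measure_eq_zero_iff_ae_notMem.mp hκ] with x hx
    exact hasDerivAt_putPayoff hx
  obtain ⟨-, hderiv⟩ := hasDerivAt_integral_of_dominated_loc_of_lip
    (Iic_mem_nhds (lt_add_one κ)) (Eventually.of_forall hmeas) hint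
    ((measurable_const.indicator measurableSet_Iio).aestronglyMeasurable)
    (ae_of_all _ fun x => lipschitzOnWith_putPayoff_Iic (κ + 1) (exp x))
    (integrable_const _) hdiff
  rwa [integral_indicator_const _ measurableSet_Iio, measureReal_congr (Iio_ae_eq_Iic' hκ),
    smul_eq_mul, mul_comm] at hderiv

theorem put_price_deriv_recovers_cdf
    (μ : Measure ℝ) [IsProbabilityMeasure μ] (κ : ℝ) (hκ : μ {κ} = 0) :
    HasDerivAt (fun κ' => ∫ x, max (Real.exp κ' - Real.exp x) 0 ∂μ)
      (Real.exp κ * (μ (Set.Iic κ)).toReal) κ ∧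
    (μ (Set.Iic κ)).toReal
      = Real.exp (-κ) * deriv (fun κ' => ∫ x, max (Real.exp κ' - Real.exp x) 0 ∂μ) κ := by
  have hderiv := hasDerivAt_integral_putPayoff μ hκ
  refine ⟨hderiv, ?_⟩
  rw [hderiv.deriv, ← mul_assoc, ← exp_add, neg_add_cancel, exp_zero, one_mul, measureReal_def]
end

section
/- For every fixed κ ∈ ℝ, the Black–Scholes put price ω ↦ p_BS(ω, κ) = exp κ · Φ((κ + ω²/2)/ω) − Φ((κ − ω²/2)/ω) is strictly monotone increasing on (0, ∞). -/
open MeasureTheory Real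

/-- Standard normal probability density function. -/
noncomputable def stdNormalPDF (z : ℝ) : ℝ := Real.exp (-z ^ 2 / 2) / Real.sqrt (2 * Real.pi)

/-- Standard normal cumulative distribution function. -/
noncomputable def stdNormalCDF (z : ℝ) : ℝ := ∫ u in Set.Iic z, stdNormalPDF u

/-!
With `d₋ = (κ - ω²/2)/ω` one has `(κ + ω²/2)/ω = d₋ + ω` and `e^κ φ(d₋ + ω) = φ(d₋)`, since
`(d₋ + ω)² - d₋² = 2κ`. Differentiating `e^κ Φ(d₋ + ω) - Φ(d₋)` in `ω`, the two terms carrying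
`∂d₋/∂ω` therefore cancel and the vega is `φ(d₋) > 0`.
-/

open Set

theorem hasDerivAt_integral_Iic {E : Type*} [NormedAddCommGroup E] [NormedSpace ℝ E]
    [CompleteSpace E] {f : ℝ → E} (hf : Continuous f) (hfi : Integrable f) (x : ℝ) :
    HasDerivAt (fun y => ∫ t in Iic y, f t) (f x) x := by
  have hsplit :
      (fun y => ∫ t in Iic y, f t) = fun y => (∫ t in Iic 0, f t) + ∫ t in 0..y, f t := by
    funext y
    rw [← intervalIntegral.integral_Iic_sub_Iic hfi.integrableOn hfi.integrableOn,
      add_sub_cancel]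
  rw [hsplit]
  exact (hf.integral_hasStrictDerivAt 0 x).hasDerivAt.const_add _

theorem continuous_stdNormalPDF : Continuous stdNormalPDF := by
  unfold stdNormalPDF
  fun_prop

theorem stdNormalPDF_pos (z : ℝ) : 0 < stdNormalPDF z := by
  unfold stdNormalPDF
  positivity

theorem integrable_stdNormalPDF : Integrable stdNormalPDF := by
  convert (integrable_exp_neg_mul_sq (b := 1 / 2) (by norm_num)).div_const √(2 * π) using 2 with z
  unfold stdNormalPDF
  ring_nf

theorem hasDerivAt_stdNormalCDF (z : ℝ) : HasDerivAt stdNormalCDF (stdNormalPDF z) z :=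
  hasDerivAt_integral_Iic continuous_stdNormalPDF integrable_stdNormalPDF z

noncomputable def blackScholesPut (κ ω : ℝ) : ℝ :=
  exp κ * stdNormalCDF ((κ + ω ^ 2 / 2) / ω) - stdNormalCDF ((κ - ω ^ 2 / 2) / ω)

theorem add_sq_half_div_eq_sub_sq_half_div_add (κ x : ℝ) :
    (κ + x ^ 2 / 2) / x = (κ - x ^ 2 / 2) / x + x := by
  rcases eq_or_ne x 0 with rfl | hx
  · simp
  · field_simp
    ring

theorem blackScholesPut_eq (κ : ℝ) :
    blackScholesPut κ = fun ω => exp κ * stdNormalCDF ((κ - ω ^ 2 / 2) / ω + ω)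
      - stdNormalCDF ((κ - ω ^ 2 / 2) / ω) := by
  funext ω
  rw [blackScholesPut, add_sq_half_div_eq_sub_sq_half_div_add]

theorem exp_mul_stdNormalPDF_add_self (κ : ℝ) {ω : ℝ} (hω : ω ≠ 0) :
    exp κ * stdNormalPDF ((κ - ω ^ 2 / 2) / ω + ω) = stdNormalPDF ((κ - ω ^ 2 / 2) / ω) := by
  unfold stdNormalPDF
  rw [mul_div_assoc', ← exp_add]
  congr 2
  field_simp
  ring

theorem hasDerivAt_blackScholesPut (κ : ℝ) {ω : ℝ} (hω : ω ≠ 0) :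
    HasDerivAt (blackScholesPut κ) (stdNormalPDF ((κ - ω ^ 2 / 2) / ω)) ω := by
  obtain ⟨d', hd⟩ : ∃ d', HasDerivAt (fun x => (κ - x ^ 2 / 2) / x) d' ω :=
    ⟨_, (by fun_prop (disch := assumption) : DifferentiableAt ℝ _ ω).hasDerivAt⟩
  have hput := (((hasDerivAt_stdNormalCDF _).comp ω (hd.add (hasDerivAt_id ω))).const_mul
    (exp κ)).sub ((hasDerivAt_stdNormalCDF _).comp ω hd)
  rw [blackScholesPut_eq]
  refine hput.congr_deriv ?_
  simp only [Pi.add_apply, id]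
  rw [← mul_assoc, exp_mul_stdNormalPDF_add_self κ hω]
  ring

theorem blackScholes_put_strictMono_in_vol (κ : ℝ) :
    StrictMonoOn
      (fun ω => Real.exp κ * stdNormalCDF ((κ + ω ^ 2 / 2) / ω)
        - stdNormalCDF ((κ - ω ^ 2 / 2) / ω))
      (Set.Ioi (0 : ℝ)) := by
  change StrictMonoOn (blackScholesPut κ) (Ioi 0)
  have hderiv (ω : ℝ) (hω : 0 < ω) := hasDerivAt_blackScholesPut κ hω.ne'
  refine strictMonoOn_of_deriv_pos (convex_Ioi 0)
    (fun ω hω => (hderiv ω hω).continuousAt.continuousWithinAt) fun ω hω => ?_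
  rw [interior_Ioi] at hω
  rw [(hderiv ω hω).deriv]
  exact stdNormalPDF_pos _
end

section
/- (Esscher tilting of the logistic-beta density.) Let α > 0, β > 0, 0 < ς < β, μ ∈ ℝ. Then for every x ∈ ℝ, exp(x) · (1/ς) φ_LB((x − μ)/ς; α, β) = exp(μ) · (B(α + ς, β − ς)/B(α, β)) · (1/ς) φ_LB((x − μ)/ς; α + ς, β − ς). In particular, if exp(μ) = B(α, β)/B(α + ς, β − ς), then the exponentially tilted density x ↦ exp(x) ψ_LB(x) coincides pointwise with the logistic-beta density with parameters (μ, ς, α + ς, β − ς). -/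
/-!
Since `Φ_L(z) / (1 - Φ_L(z)) = exp z`, the tilt `exp (ς z) = Φ_L(z) ^ ς (1 - Φ_L(z)) ^ (-ς)`
moves the shape parameters `(α, β)` of the unnormalised density to `(α + ς, β - ς)`, and the
ratio of Beta functions corrects the normalisation. The substitution `x = μ + ς z` turns `exp x`
into `exp μ · exp (ς z)`.
-/

open MeasureTheory Real

/-- PDF of the standard logistic distribution. -/
noncomputable def logisticPDF (z : ℝ) : ℝ := Real.exp z / (1 + Real.exp z) ^ 2

/-- CDF of the standard logistic distribution. -/
noncomputable def logisticCDF (z : ℝ) : ℝ := Real.exp z / (1 + Real.exp z)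

/-- The Beta function. -/
noncomputable def Beta (a b : ℝ) : ℝ := ∫ u in (0:ℝ)..1, u ^ (a - 1) * (1 - u) ^ (b - 1)

/-- PDF of the standard logistic-beta distribution. -/
noncomputable def logisticBetaPDF (z α β : ℝ) : ℝ :=
  logisticPDF z * logisticCDF z ^ (α - 1) * (1 - logisticCDF z) ^ (β - 1) / Beta α β

lemma Real.rpow_add_mul_rpow_sub {p q : ℝ} (hp : 0 < p) (hq : 0 < q) (a b s : ℝ) :
    p ^ (a + s) * q ^ (b - s) = (p / q) ^ s * (p ^ a * q ^ b) := by
  rw [rpow_add hp, rpow_sub hq, div_rpow hp.le hq.le]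
  field_simp

lemma intervalIntegrable_beta_integrand {a b : ℝ} (ha : 0 < a) (hb : 0 < b) :
    IntervalIntegrable (fun u : ℝ => u ^ (a - 1) * (1 - u) ^ (b - 1)) volume 0 1 := by
  have hconv := Complex.betaIntegral_convergent (u := a) (v := b) (by simpa) (by simpa)
  refine IntervalIntegrable.congr (fun u hu => ?_) ⟨hconv.1.re, hconv.2.re⟩
  rw [Set.uIoc_of_le zero_le_one] at hu
  have h1u : 0 ≤ 1 - u := by linarith [hu.2]
  simp only [← Complex.ofReal_one, ← Complex.ofReal_sub, ← Complex.ofReal_cpow hu.1.le,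
    ← Complex.ofReal_cpow h1u, ← Complex.ofReal_mul]
  exact Complex.ofReal_re _

lemma Beta_pos {a b : ℝ} (ha : 0 < a) (hb : 0 < b) : 0 < Beta a b :=
  intervalIntegral.intervalIntegral_pos_of_pos_on (intervalIntegrable_beta_integrand ha hb)
    (fun u hu => mul_pos (rpow_pos_of_pos hu.1 _) (rpow_pos_of_pos (by linarith [hu.2]) _))
    zero_lt_one

lemma logisticCDF_eq_sigmoid (z : ℝ) : logisticCDF z = sigmoid z := by
  rw [logisticCDF, sigmoid_def, exp_neg]
  field_simp
  ring

lemma logisticCDF_div_one_sub (z : ℝ) : logisticCDF z / (1 - logisticCDF z) = exp z := by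
  rw [logisticCDF_eq_sigmoid, ← sigmoid_neg, ← sigmoid_mul_rexp_neg, exp_neg]
  field_simp [(sigmoid_pos z).ne']

lemma exp_mul_logisticBetaPDF (z α β s : ℝ) (hB : Beta (α + s) (β - s) ≠ 0) :
    exp (s * z) * logisticBetaPDF z α β
      = Beta (α + s) (β - s) / Beta α β * logisticBetaPDF z (α + s) (β - s) := by
  have hΦ : 0 < logisticCDF z := by rw [logisticCDF_eq_sigmoid]; exact sigmoid_pos z
  have h1Φ : 0 < 1 - logisticCDF z := by
    rw [logisticCDF_eq_sigmoid, ← sigmoid_neg]; exact sigmoid_pos _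
  have hpow : logisticCDF z ^ (α + s - 1) * (1 - logisticCDF z) ^ (β - s - 1)
      = exp z ^ s * (logisticCDF z ^ (α - 1) * (1 - logisticCDF z) ^ (β - 1)) := by
    rw [← logisticCDF_div_one_sub, ← rpow_add_mul_rpow_sub hΦ h1Φ]
    ring_nf
  rw [logisticBetaPDF, logisticBetaPDF, mul_assoc (logisticPDF z),
    mul_assoc (logisticPDF z) (logisticCDF z ^ (α + s - 1)), hpow, mul_comm s, exp_mul]
  field_simp

lemma exp_mul_scaled_logisticBetaPDF (x μ α β ς : ℝ) (hς : ς ≠ 0)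
    (hB : Beta (α + ς) (β - ς) ≠ 0) :
    exp x * ((1 / ς) * logisticBetaPDF ((x - μ) / ς) α β)
      = exp μ * (Beta (α + ς) (β - ς) / Beta α β)
        * ((1 / ς) * logisticBetaPDF ((x - μ) / ς) (α + ς) (β - ς)) := by
  have hx : exp x = exp μ * exp (ς * ((x - μ) / ς)) := by
    rw [← exp_add, mul_div_cancel₀ _ hς, add_sub_cancel]
  rw [hx]
  linear_combination (exp μ / ς) * exp_mul_logisticBetaPDF ((x - μ) / ς) α β ς hB

theorem logisticBeta_esscher_tilting (α β ς μ : ℝ)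
    (hα : 0 < α) (hβ : 0 < β) (hς : 0 < ς) (hςβ : ς < β) :
    (∀ x : ℝ, Real.exp x * ((1 / ς) * logisticBetaPDF ((x - μ) / ς) α β)
      = Real.exp μ * (Beta (α + ς) (β - ς) / Beta α β)
        * ((1 / ς) * logisticBetaPDF ((x - μ) / ς) (α + ς) (β - ς))) ∧
    (Real.exp μ = Beta α β / Beta (α + ς) (β - ς) →
      ∀ x : ℝ, Real.exp x * ((1 / ς) * logisticBetaPDF ((x - μ) / ς) α β)
        = (1 / ς) * logisticBetaPDF ((x - μ) / ς) (α + ς) (β - ς)) := by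
  have hB : Beta α β ≠ 0 := (Beta_pos hα hβ).ne'
  have hB' : Beta (α + ς) (β - ς) ≠ 0 := (Beta_pos (by linarith) (by linarith)).ne'
  have tilt := fun x => exp_mul_scaled_logisticBetaPDF x μ α β ς hς.ne' hB'
  refine ⟨tilt, fun hμ x => ?_⟩
  rw [tilt x, hμ]
  field_simp
end
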